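/- arXiv:1904.04494 — 2 statements merged into one kernel-verified Lean document; each statement's English description precedes it below -/
import Mathlib

section
/- Let K be a field, f ∈ K[[z]] a power series with mult(f) − 1 = q ≥ 1, and let a be the coefficient of z^{q+1} in f(z). Then for every integer n ≥ 1, f^n(z) − z ≡ n·(f(z) − z) + C(n,2)·(q+1)·a^2·z^{2q+1} mod z^{2q+2}, where C(n,2) = n(n−1)/2 and the integers n, C(n,2)(q+1) are interpreted via the natural map ℤ → K. -/
open PowerSeries Finset

/-- Residue fixed point index: coefficient of 1/z in the Laurent expansion of 1/(z - f(z)). -/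
noncomputable def ind {K : Type*} [Field K] (f : PowerSeries K) : K :=
  (((HahnSeries.ofPowerSeries ℤ K) (PowerSeries.X - f) : LaurentSeries K)⁻¹).coeff (-1)

/-- Composition of formal power series: `pcomp f g = f ∘ g` (valid when `g` has zero
constant term). -/
noncomputable def pcomp {R : Type*} [CommRing R] (f g : PowerSeries R) : PowerSeries R :=
  PowerSeries.mk fun n =>
    ∑ k ∈ Finset.range (n + 1), PowerSeries.coeff (R := R) k f * PowerSeries.coeff (R := R) n (g ^ k)

/-- n-fold compositional iterate of a power series. -/
noncomputable def piter {R : Type*} [CommRing R] (f : PowerSeries R) : ℕ → PowerSeries R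
  | 0 => PowerSeries.X
  | n + 1 => pcomp f (piter f n)

lemma coeff_pcomp' {K : Type*} [Field K] (f h : PowerSeries K) (i : ℕ) :
    PowerSeries.coeff (R := K) i (pcomp f h) =
      ∑ k ∈ range (i + 1), PowerSeries.coeff (R := K) k f * PowerSeries.coeff (R := K) i (h ^ k) := by
  simp [pcomp]

lemma key_step {K : Type*} [Field K] (q : ℕ) (hq : 1 ≤ q) (a : K) (f : PowerSeries K)
    (hf0 : PowerSeries.coeff (R := K) 0 f = 0) (hf1 : PowerSeries.coeff (R := K) 1 f = 1)
    (hfm : ∀ k, 2 ≤ k → k ≤ q → PowerSeries.coeff (R := K) k f = 0)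
    (hfq : PowerSeries.coeff (R := K) (q + 1) f = a)
    (u : PowerSeries K) (hu : ∀ j ≤ q, PowerSeries.coeff (R := K) j u = 0)
    (i : ℕ) (hi : i < 2 * q + 2) :
    PowerSeries.coeff (R := K) i (pcomp f (PowerSeries.X + u)) =
      PowerSeries.coeff (R := K) i f + PowerSeries.coeff (R := K) i u +
        (if i = 2 * q + 1 then ((q : K) + 1) * a * PowerSeries.coeff (R := K) (q + 1) u else 0) := by
  have hXu : (PowerSeries.X : PowerSeries K) ^ (q + 1) ∣ u :=
    PowerSeries.X_pow_dvd_iff.mpr fun m hm => hu m (by omega)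
  have hu2dvd : ∀ m, 2 ≤ m → (PowerSeries.X : PowerSeries K) ^ (2 * q + 2) ∣ u ^ m := by
    intro m hm
    have h2 : (PowerSeries.X : PowerSeries K) ^ (2 * q + 2) ∣ u ^ 2 := by
      have := mul_dvd_mul hXu hXu
      rw [← pow_add, ← pow_two] at this
      have he : q + 1 + (q + 1) = 2 * q + 2 := by ring
      rwa [he] at this
    exact h2.trans (pow_dvd_pow u hm)
  have hpow : ∀ k, 1 ≤ k → k ≤ i →
      PowerSeries.coeff (R := K) i ((PowerSeries.X + u) ^ k) =
        (if i = k then 1 else 0) + (k : K) * PowerSeries.coeff (R := K) (i - (k - 1)) u := by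
    intro k hk hki
    rw [add_pow, map_sum]
    have hterm : ∀ j ∈ range (k + 1),
        PowerSeries.coeff (R := K) i (PowerSeries.X ^ j * u ^ (k - j) * ((k.choose j : ℕ) : PowerSeries K)) =
          (if j = k then (if i = k then 1 else 0) else 0) +
          (if j = k - 1 then (k : K) * PowerSeries.coeff (R := K) (i - (k - 1)) u else 0) := by
      intro j hj
      rcases eq_or_ne j k with rfl | hjk
      · have h1 : ¬ (j = j - 1) := by omega
        simp [PowerSeries.coeff_X_pow, h1]
      · rcases eq_or_ne j (k - 1) with rfl | hjk1
        · have hsub : k - (k - 1) = 1 := by omega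
          rw [hsub, pow_one, if_neg hjk, if_pos rfl]
          have hch : k.choose (k - 1) = k := by
            rw [Nat.choose_symm (by omega), Nat.choose_one_right]
          rw [hch]
          have hc : ((k : ℕ) : PowerSeries K) = PowerSeries.C (R := K) (k : K) := by simp
          rw [hc, PowerSeries.coeff_mul_C]
          have hi' : PowerSeries.coeff (R := K) i (PowerSeries.X ^ (k - 1) * u) =
              PowerSeries.coeff (R := K) (i - (k - 1)) u := by
            have he : i = (i - (k - 1)) + (k - 1) := by omega
            conv_lhs => rw [he]
            rw [PowerSeries.coeff_X_pow_mul]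
          rw [hi']
          ring
        · have hkj2 : 2 ≤ k - j := by
            have := mem_range.mp hj; omega
          have hdvd : (PowerSeries.X : PowerSeries K) ^ (2 * q + 2) ∣
              PowerSeries.X ^ j * u ^ (k - j) * ((k.choose j : ℕ) : PowerSeries K) :=
            ((hu2dvd _ hkj2).mul_left _).mul_right _
          rw [PowerSeries.X_pow_dvd_iff.mp hdvd i hi, if_neg hjk, if_neg hjk1, add_zero]
    rw [Finset.sum_congr rfl hterm, Finset.sum_add_distrib,
      Finset.sum_ite_eq' (range (k + 1)) k, Finset.sum_ite_eq' (range (k + 1)) (k - 1)]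
    rw [if_pos (mem_range.mpr (by omega)), if_pos (mem_range.mpr (by omega))]
  rw [coeff_pcomp']
  have hterm : ∀ k ∈ range (i + 1),
      PowerSeries.coeff (R := K) k f * PowerSeries.coeff (R := K) i ((PowerSeries.X + u) ^ k) =
        (if k = i then PowerSeries.coeff (R := K) i f else 0) +
        (if k = 1 then PowerSeries.coeff (R := K) i u else 0) +
        (if i = 2 * q + 1 ∧ k = q + 1 then ((q : K) + 1) * a * PowerSeries.coeff (R := K) (q + 1) u
          else 0) := by
    intro k hk
    have hki : k ≤ i := by have := mem_range.mp hk; omega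
    rcases Nat.eq_zero_or_pos k with rfl | hk1
    · rw [hf0, zero_mul]
      have h2 : ¬ ((0 : ℕ) = 1) := by omega
      have h3 : ¬ (i = 2 * q + 1 ∧ (0 : ℕ) = q + 1) := fun h => by omega
      rw [if_neg h2, if_neg h3]
      rcases eq_or_ne (0 : ℕ) i with h0 | h0
      · rw [if_pos h0, ← h0, hf0, add_zero, add_zero]
      · rw [if_neg h0, add_zero, add_zero]
    · rw [hpow k hk1 hki]
      rcases eq_or_ne k 1 with rfl | hk1'
      · rw [hf1, one_mul]
        have e0 : i - (1 - 1) = i := by omega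
        rw [e0]
        have h2 : (1 : ℕ) = 1 := rfl
        rw [if_pos h2]
        have h3 : ¬ (i = 2 * q + 1 ∧ (1 : ℕ) = q + 1) := fun h => by omega
        rw [if_neg h3, add_zero]
        rcases eq_or_ne i 1 with h0 | h0
        · rw [if_pos h0, if_pos h0.symm, h0, hf1]
          norm_num
        · rw [if_neg h0, if_neg (Ne.symm h0), zero_add]
          norm_num
      · rcases eq_or_ne k (q + 1) with rfl | hkq
        · rw [hfq, if_neg hk1', add_zero]
          rcases eq_or_ne i (2 * q + 1) with h2q | h2q
          · have hand : i = 2 * q + 1 ∧ q + 1 = q + 1 := ⟨h2q, rfl⟩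
            have h1 : ¬ (i = q + 1) := by omega
            have h1' : ¬ (q + 1 = i) := by omega
            have e : i - (q + 1 - 1) = q + 1 := by omega
            rw [if_pos hand, if_neg h1, if_neg h1', e]
            push_cast
            ring
          · have h3 : ¬ (i = 2 * q + 1 ∧ q + 1 = q + 1) := fun h => h2q h.1
            rw [if_neg h3, add_zero]
            have hz : PowerSeries.coeff (R := K) (i - (q + 1 - 1)) u = 0 := hu _ (by omega)
            rw [hz, mul_zero, add_zero]
            rcases eq_or_ne i (q + 1) with h0 | h0
            · rw [if_pos h0, if_pos h0.symm, h0, hfq, mul_one]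
            · rw [if_neg h0, if_neg (Ne.symm h0), mul_zero]
        · have h3 : ¬ (i = 2 * q + 1 ∧ k = q + 1) := fun h => hkq h.2
          rw [if_neg h3, if_neg hk1', add_zero, add_zero]
          rcases Nat.lt_or_ge k (q + 1) with hlt | hge
          · have hk0 : PowerSeries.coeff (R := K) k f = 0 := hfm k (by omega) (by omega)
            rw [hk0, zero_mul]
            rcases eq_or_ne k i with h0 | h0
            · rw [if_pos h0, ← h0, hk0]
            · rw [if_neg h0]
          · have hz : PowerSeries.coeff (R := K) (i - (k - 1)) u = 0 := hu _ (by omega)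
            rw [hz, mul_zero, add_zero]
            rcases eq_or_ne k i with h0 | h0
            · rw [if_pos h0, if_pos h0.symm, ← h0, mul_one]
            · rw [if_neg h0, if_neg (Ne.symm h0), mul_zero]
  rw [Finset.sum_congr rfl hterm, Finset.sum_add_distrib, Finset.sum_add_distrib]
  have hsum1 : (∑ k ∈ range (i + 1), if k = i then PowerSeries.coeff (R := K) i f else 0) =
      PowerSeries.coeff (R := K) i f := by
    rw [Finset.sum_ite_eq' (range (i + 1)) i, if_pos (mem_range.mpr (by omega))]
  have hsum2 : (∑ k ∈ range (i + 1), if k = 1 then PowerSeries.coeff (R := K) i u else 0) =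
      PowerSeries.coeff (R := K) i u := by
    rw [Finset.sum_ite_eq' (range (i + 1)) 1]
    rcases eq_or_ne i 0 with rfl | h0
    · rw [if_neg (by simp), hu 0 (by omega)]
    · rw [if_pos (mem_range.mpr (by omega))]
  have hsum3 : (∑ k ∈ range (i + 1),
      if i = 2 * q + 1 ∧ k = q + 1 then ((q : K) + 1) * a * PowerSeries.coeff (R := K) (q + 1) u
        else 0) =
      (if i = 2 * q + 1 then ((q : K) + 1) * a * PowerSeries.coeff (R := K) (q + 1) u else 0) := by
    rcases eq_or_ne i (2 * q + 1) with h | h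
    · rw [if_pos h]
      have hcong : ∀ k ∈ range (i + 1),
          (if i = 2 * q + 1 ∧ k = q + 1 then ((q : K) + 1) * a * PowerSeries.coeff (R := K) (q + 1) u
            else 0) =
          (if k = q + 1 then ((q : K) + 1) * a * PowerSeries.coeff (R := K) (q + 1) u else 0) := by
        intro k _
        rcases eq_or_ne k (q + 1) with h2 | h2
        · rw [if_pos ⟨h, h2⟩, if_pos h2]
        · have h3 : ¬ (i = 2 * q + 1 ∧ k = q + 1) := fun hc => h2 hc.2
          rw [if_neg h3, if_neg h2]
      rw [Finset.sum_congr rfl hcong, Finset.sum_ite_eq' (range (i + 1)) (q + 1),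
        if_pos (mem_range.mpr (by omega))]
    · rw [if_neg h]
      apply Finset.sum_eq_zero
      intro k _
      exact if_neg (fun hc => h hc.1)
  rw [hsum1, hsum2, hsum3]

theorem stmt14 {K : Type*} [Field K] (q : ℕ) (hq : 1 ≤ q) (f : PowerSeries K)
    (hmult : (f - PowerSeries.X).order = ((q + 1 : ℕ) : ℕ∞))
    (a : K) (ha : a = PowerSeries.coeff (R := K) (q + 1) f)
    (n : ℕ) (hn : 1 ≤ n) :
    ∀ i < 2 * q + 2,
      PowerSeries.coeff (R := K) i (piter f n - PowerSeries.X) =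
      PowerSeries.coeff (R := K) i ((n : K) • (f - PowerSeries.X) +
        PowerSeries.C (R := K) ((n.choose 2 * (q + 1) : ℕ) * a ^ 2) *
          PowerSeries.X ^ (2 * q + 1)) := by
  have hgz : ∀ j, j < q + 1 → PowerSeries.coeff (R := K) j (f - PowerSeries.X) = 0 := by
    intro j hj
    apply PowerSeries.coeff_of_lt_order
    rw [hmult]
    exact_mod_cast hj
  have hf0 : PowerSeries.coeff (R := K) 0 f = 0 := by
    have h := hgz 0 (by omega)
    rwa [map_sub, PowerSeries.coeff_X, if_neg (by omega), sub_zero] at h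
  have hf1 : PowerSeries.coeff (R := K) 1 f = 1 := by
    have h := hgz 1 (by omega)
    rwa [map_sub, PowerSeries.coeff_X, if_pos rfl, sub_eq_zero] at h
  have hfm : ∀ k, 2 ≤ k → k ≤ q → PowerSeries.coeff (R := K) k f = 0 := by
    intro k h2 hk
    have h := hgz k (by omega)
    rw [map_sub, PowerSeries.coeff_X, if_neg (by omega), sub_zero] at h
    exact h
  have hfq : PowerSeries.coeff (R := K) (q + 1) f = a := ha.symm
  have hga : PowerSeries.coeff (R := K) (q + 1) (f - PowerSeries.X) = a := by
    rw [map_sub, PowerSeries.coeff_X, if_neg (by omega), sub_zero, hfq]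
  have main : ∀ m, ∀ i, i < 2 * q + 2 →
      PowerSeries.coeff (R := K) i (piter f m) = PowerSeries.coeff (R := K) i PowerSeries.X
        + (m : K) * PowerSeries.coeff (R := K) i (f - PowerSeries.X)
        + (if i = 2 * q + 1 then (m.choose 2 : K) * (((q : K) + 1) * a ^ 2) else 0) := by
    intro m
    induction m with
    | zero => intro i hi; simp [piter, Nat.choose]
    | succ m ih =>
      intro i hi
      have hu : ∀ j ≤ q, PowerSeries.coeff (R := K) j (piter f m - PowerSeries.X) = 0 := by
        intro j hj
        rw [map_sub, ih j (by omega), if_neg (by omega), hgz j (by omega)]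
        ring
      have hX : PowerSeries.X + (piter f m - PowerSeries.X) = piter f m := by ring
      have hk := key_step q hq a f hf0 hf1 hfm hfq (piter f m - PowerSeries.X) hu i hi
      rw [hX] at hk
      have huq : PowerSeries.coeff (R := K) (q + 1) (piter f m - PowerSeries.X) = (m : K) * a := by
        rw [map_sub, ih (q + 1) (by omega), if_neg (by omega), PowerSeries.coeff_X,
          if_neg (by omega), hga]
        ring
      show PowerSeries.coeff (R := K) i (pcomp f (piter f m)) = _
      rw [hk, huq, map_sub, ih i hi]
      have hfi : PowerSeries.coeff (R := K) i f =
          PowerSeries.coeff (R := K) i (f - PowerSeries.X) + PowerSeries.coeff (R := K) i PowerSeries.X := by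
        rw [map_sub]; ring
      rw [hfi]
      have hch : ((m + 1).choose 2 : K) = (m.choose 2 : K) + (m : K) := by
        have h := Nat.choose_succ_succ m 1
        have : (m + 1).choose 2 = m.choose 1 + m.choose 2 := h
        rw [this]
        push_cast [Nat.choose_one_right]
        ring
      by_cases h2 : i = 2 * q + 1
      · simp only [if_pos h2, hch]
        push_cast
        ring
      · simp only [if_neg h2]
        push_cast
        ring
  intro i hi
  rw [map_sub, main n i hi, map_add, map_smul, smul_eq_mul, PowerSeries.coeff_C_mul,
    PowerSeries.coeff_X_pow]
  by_cases h2 : i = 2 * q + 1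
  · simp only [if_pos h2]
    push_cast
    ring
  · simp only [if_neg h2]
    push_cast
    ring
end

section
/- Let K be a field, q ≥ 1 an integer, and a_q, …, a_{2q} ∈ K with a_q ≠ 0. Define P_q(a_q,…,a_{2q}) = −(1/a_q^{q+1}) Σ over ι ∈ ℕ^{q+1} with |ι| = q and ‖ι‖ = q of (−1)^{q−ι_0}(q−ι_0 choose ι_1,…,ι_q) Π_{j=0}^q a_{q+j}^{ι_j}. Then for every λ ∈ K: (1) P_q(a_q, …, a_{2q−1}, a_{2q} + λ a_q^2) = P_q(a_q, …, a_{2q}) + λ, and (2) if λ ≠ 0 then P_q(λa_q, …, λa_{2q}) = (1/λ) P_q(a_q, …, a_{2q}). -/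
/-- Closed-form expression for the residue fixed point index of
z(1 + a_q z^q + ⋯ + a_{2q} z^{2q} + ⋯). -/
noncomputable def Pq {K : Type*} [Field K] (q : ℕ) (a : ℕ → K) : K :=
  -(1 / (a q) ^ (q + 1)) *
    ∑ ι ∈ Finset.filter
        (fun ι => (∑ j : Fin (q + 1), ι j) = q ∧ (∑ j : Fin (q + 1), (j : ℕ) * ι j) = q)
        (Fintype.piFinset fun _ : Fin (q + 1) => Finset.range (q + 1)),
      (-1 : K) ^ (q - ι 0) * (Nat.multinomial (Finset.univ.erase 0) ι : K) *
        ∏ j : Fin (q + 1), a (q + (j : ℕ)) ^ ι j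

theorem stmt18 {K : Type*} [Field K] (q : ℕ) (hq : 1 ≤ q) (a : ℕ → K) (haq : a q ≠ 0)
    (l : K) :
    Pq q (Function.update a (2 * q) (a (2 * q) + l * (a q) ^ 2)) = Pq q a + l ∧
    (l ≠ 0 → Pq q (fun j => l * a j) = (1 / l) * Pq q a) := by
  constructor
  · set a' : ℕ → K := Function.update a (2 * q) (a (2 * q) + l * (a q) ^ 2) with ha'
    have hq0 : q ≠ 0 := by omega
    have hlast0 : (Fin.last q : Fin (q + 1)) ≠ 0 := by
      simp [Fin.ext_iff]; omega
    set ι' : Fin (q + 1) → ℕ :=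
      fun j => if j = 0 then q - 1 else if j = Fin.last q then 1 else 0 with hι'
    have hι'0 : ι' 0 = q - 1 := by simp [hι']
    have hι'last : ι' (Fin.last q) = 1 := by simp [hι', hlast0]
    have hι'sum : ∑ j : Fin (q + 1), ι' j = q := by
      have hpt : ∀ j : Fin (q + 1), ι' j =
          (if j = 0 then q - 1 else 0) + (if j = Fin.last q then 1 else 0) := by
        intro j
        by_cases h0 : j = 0
        · subst h0; simp [hι', (Ne.symm hlast0)]
        · simp [hι', h0]
      rw [Finset.sum_congr rfl fun j _ => hpt j, Finset.sum_add_distrib,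
        Finset.sum_ite_eq' Finset.univ (0 : Fin (q+1)),
        Finset.sum_ite_eq' Finset.univ (Fin.last q)]
      simp only [Finset.mem_univ, if_true]
      omega
    have hι'wsum : ∑ j : Fin (q + 1), (j : ℕ) * ι' j = q := by
      have hpt : ∀ j : Fin (q + 1), (j : ℕ) * ι' j = (if j = Fin.last q then q else 0) := by
        intro j
        by_cases h0 : j = 0
        · subst h0; simp [Ne.symm hlast0]
        · by_cases hl : j = Fin.last q
          · subst hl; simp [hι', hlast0]
          · simp [hι', h0, hl]
      rw [Finset.sum_congr rfl fun j _ => hpt j,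
        Finset.sum_ite_eq' Finset.univ (Fin.last q)]
      simp only [Finset.mem_univ, if_true]
    have hι'mem : ι' ∈ Finset.filter
          (fun ι => (∑ j : Fin (q + 1), ι j = q) ∧ (∑ j : Fin (q + 1), (j : ℕ) * ι j) = q)
          (Fintype.piFinset fun _ : Fin (q + 1) => Finset.range (q + 1)) := by
      refine Finset.mem_filter.mpr ⟨?_, hι'sum, hι'wsum⟩
      refine Fintype.mem_piFinset.mpr fun j => Finset.mem_range.mpr ?_
      by_cases h0 : j = 0
      · subst h0; rw [hι'0]; omega
      · by_cases hl : j = Fin.last q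
        · subst hl; rw [hι'last]; omega
        · have hz : ι' j = 0 := by simp [hι', h0, hl]
          rw [hz]; omega
    have hmulti : Nat.multinomial (Finset.univ.erase (0 : Fin (q+1))) ι' = 1 := by
      have hs : ∑ i ∈ Finset.univ.erase (0 : Fin (q+1)), ι' i = 1 := by
        have hpt : ∀ i ∈ Finset.univ.erase (0 : Fin (q+1)), ι' i =
            (if i = Fin.last q then 1 else 0) := by
          intro i hi
          have h0 : i ≠ 0 := (Finset.mem_erase.mp hi).1
          simp [hι', h0]
        rw [Finset.sum_congr rfl hpt, Finset.sum_ite_eq' _ (Fin.last q)]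
        simp [Finset.mem_erase, hlast0]
      have hp : ∏ i ∈ Finset.univ.erase (0 : Fin (q+1)), (ι' i).factorial = 1 := by
        refine Finset.prod_eq_one fun i hi => ?_
        have h0 : i ≠ 0 := (Finset.mem_erase.mp hi).1
        by_cases hl : i = Fin.last q
        · subst hl; rw [hι'last]; exact Nat.factorial_one
        · have hz : ι' i = 0 := by simp [hι', h0, hl]
          rw [hz]; exact Nat.factorial_zero
      rw [Nat.multinomial, hs, hp]
      norm_num [Nat.factorial]
    have huniq : ∀ ι : Fin (q + 1) → ℕ,
        (∑ j : Fin (q + 1), ι j = q) → (∑ j : Fin (q + 1), (j : ℕ) * ι j = q) →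
        ι (Fin.last q) ≠ 0 → ι = ι' := by
      intro ι hsum hwsum hlne
      have hws : (∑ j : Fin q, ((j.castSucc : Fin (q+1)) : ℕ) * ι j.castSucc)
          + q * ι (Fin.last q) = q := by
        have h := Fin.sum_univ_castSucc (fun j : Fin (q+1) => (j : ℕ) * ι j)
        rw [h] at hwsum
        simpa using hwsum
      have hx1 : ι (Fin.last q) ≤ 1 := by
        by_contra h
        push_neg at h
        have h2 : q * 2 ≤ q * ι (Fin.last q) := Nat.mul_le_mul_left q h
        omega
      have hlast1 : ι (Fin.last q) = 1 := by omega
      rw [hlast1, Nat.mul_one] at hws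
      have h0 : ∑ j : Fin q, ((j.castSucc : Fin (q+1)) : ℕ) * ι j.castSucc = 0 := by omega
      have hzero : ∀ j : Fin q, (j : ℕ) ≠ 0 → ι j.castSucc = 0 := by
        intro j hj
        have hjz := Finset.sum_eq_zero_iff.mp h0 j (Finset.mem_univ j)
        simp only [Fin.coe_castSucc] at hjz
        rcases Nat.mul_eq_zero.mp hjz with h | h
        · exact absurd h hj
        · exact h
      have hsum' : (∑ j : Fin q, ι j.castSucc) + ι (Fin.last q) = q := by
        rw [← Fin.sum_univ_castSucc (fun j : Fin (q+1) => ι j)]; exact hsum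
      have h00 : ι 0 = q - 1 := by
        have hqpos : 0 < q := hq
        have hone : (∑ j : Fin q, ι j.castSucc) = ι (⟨0, hqpos⟩ : Fin q).castSucc := by
          refine Finset.sum_eq_single_of_mem _ (Finset.mem_univ _) fun j _ hjne => ?_
          refine hzero j ?_
          simpa [Fin.ext_iff] using hjne
        have hcast : ((⟨0, hqpos⟩ : Fin q).castSucc : Fin (q+1)) = 0 := by
          simp [Fin.ext_iff]
        rw [hcast] at hone
        omega
      funext j
      induction j using Fin.lastCases with
      | last => rw [hlast1, hι'last]
      | cast i =>
        by_cases hi0 : (i : ℕ) = 0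
        · have hc : i.castSucc = (0 : Fin (q+1)) := by simp [Fin.ext_iff, hi0]
          rw [hc, h00, hι'0]
        · rw [hzero i hi0]
          have h1 : i.castSucc ≠ (0 : Fin (q+1)) := by simp [Fin.ext_iff, hi0]
          have h2 : i.castSucc ≠ Fin.last q := Fin.ne_of_lt (Fin.castSucc_lt_last i)
          simp [hι', h1, h2]
    -- product evaluation at ι'
    have hprod : ∀ b : ℕ → K,
        ∏ j : Fin (q + 1), b (q + (j : ℕ)) ^ ι' j = b q ^ (q - 1) * b (2 * q) := by
      intro b
      rw [Fin.prod_univ_castSucc]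
      have hqpos : 0 < q := hq
      congr 1
      · rw [Finset.prod_eq_single_of_mem (⟨0, hqpos⟩ : Fin q) (Finset.mem_univ _)
          (fun j _ hjne => ?_)]
        · have hcast : ((⟨0, hqpos⟩ : Fin q).castSucc) = (0 : Fin (q+1)) := by
            simp [Fin.ext_iff]
          rw [hcast, hι'0]
          simp
        · have h1 : j.castSucc ≠ (0 : Fin (q+1)) := by
            simpa [Fin.ext_iff] using hjne
          have h2 : j.castSucc ≠ Fin.last q := Fin.ne_of_lt (Fin.castSucc_lt_last j)
          have hz : ι' j.castSucc = 0 := by simp [hι', h1, h2]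
          rw [hz, pow_zero]
      · rw [hι'last, Fin.val_last, pow_one]
        congr 1
        omega
    have ha'q : a' q = a q := Function.update_of_ne (by omega) _ _
    have ha'2q : a' (2 * q) = a (2 * q) + l * a q ^ 2 := Function.update_self _ _ _
    have hpp : (a q) ^ (q - 1) * (a q) ^ 2 = (a q) ^ (q + 1) := by
      rw [← pow_add]
      congr 1
      omega
    have hsplit : ∀ ι ∈ Finset.filter
          (fun ι => (∑ j : Fin (q + 1), ι j = q) ∧ (∑ j : Fin (q + 1), (j : ℕ) * ι j) = q)
          (Fintype.piFinset fun _ : Fin (q + 1) => Finset.range (q + 1)),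
        (-1 : K) ^ (q - ι 0) * (Nat.multinomial (Finset.univ.erase 0) ι : K) *
          ∏ j : Fin (q + 1), a' (q + (j : ℕ)) ^ ι j
        = (-1 : K) ^ (q - ι 0) * (Nat.multinomial (Finset.univ.erase 0) ι : K) *
          (∏ j : Fin (q + 1), a (q + (j : ℕ)) ^ ι j)
          + (if ι = ι' then -(l * (a q) ^ (q + 1)) else 0) := by
      intro ι hι
      obtain ⟨hpi, hsum, hwsum⟩ := Finset.mem_filter.mp hι
      by_cases he : ι = ι'
      · subst he
        rw [if_pos rfl, hmulti, hprod a', hprod a, ha'q, ha'2q, hι'0]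
        have he1 : q - (q - 1) = 1 := by omega
        rw [he1, pow_one]
        push_cast
        linear_combination (-l) * hpp
      · rw [if_neg he, add_zero]
        have hl0 : ι (Fin.last q) = 0 := by
          by_contra h
          exact he (huniq ι hsum hwsum h)
        congr 1
        refine Finset.prod_congr rfl fun j _ => ?_
        by_cases hjl : j = Fin.last q
        · subst hjl
          rw [hl0, pow_zero, pow_zero]
        · have hjq : (j : ℕ) ≠ q := by
            intro h
            exact hjl (Fin.ext (by simp [h]))
          have hne : q + (j : ℕ) ≠ 2 * q := by omega
          rw [ha', Function.update_of_ne hne]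
    simp only [Pq]
    rw [Finset.sum_congr rfl hsplit, Finset.sum_add_distrib,
      Finset.sum_ite_eq' _ ι', if_pos hι'mem, ha'q]
    have hpow : (a q) ^ (q + 1) ≠ 0 := pow_ne_zero _ haq
    field_simp
    ring
  · intro hl
    simp only [Pq]
    have hS : ∑ ι ∈ Finset.filter
          (fun ι => (∑ j : Fin (q + 1), ι j = q) ∧ (∑ j : Fin (q + 1), (j : ℕ) * ι j) = q)
          (Fintype.piFinset fun _ : Fin (q + 1) => Finset.range (q + 1)),
        (-1 : K) ^ (q - ι 0) * (Nat.multinomial (Finset.univ.erase 0) ι : K) *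
          ∏ j : Fin (q + 1), (l * a (q + (j : ℕ))) ^ ι j
        = l ^ q * ∑ ι ∈ Finset.filter
          (fun ι => (∑ j : Fin (q + 1), ι j = q) ∧ (∑ j : Fin (q + 1), (j : ℕ) * ι j) = q)
          (Fintype.piFinset fun _ : Fin (q + 1) => Finset.range (q + 1)),
        (-1 : K) ^ (q - ι 0) * (Nat.multinomial (Finset.univ.erase 0) ι : K) *
          ∏ j : Fin (q + 1), a (q + (j : ℕ)) ^ ι j := by
      rw [Finset.mul_sum]
      refine Finset.sum_congr rfl fun ι hι => ?_
      obtain ⟨-, hsum, -⟩ := Finset.mem_filter.mp hι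
      have h1 : ∏ j : Fin (q + 1), (l * a (q + (j : ℕ))) ^ ι j
          = l ^ (∑ j : Fin (q + 1), ι j) * ∏ j : Fin (q + 1), a (q + (j : ℕ)) ^ ι j := by
        rw [← Finset.prod_pow_eq_pow_sum, ← Finset.prod_mul_distrib]
        exact Finset.prod_congr rfl fun j _ => (mul_pow _ _ _)
      rw [h1, hsum]; ring
    rw [hS, mul_pow]
    have hl1 : l ^ (q + 1) ≠ 0 := pow_ne_zero _ hl
    have ha1 : (a q) ^ (q + 1) ≠ 0 := pow_ne_zero _ haq
    field_simp
    ring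
end
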